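/- arXiv:1204.6378 — 5 statements merged into one kernel-verified Lean document; each statement's English description precedes it below -/
import Mathlib

section
/- Let (X,d) be a metric space with Borel σ-algebra, m a measure on X, and j a measurable kernel on X such that the measure J(dx,dy) = j(x,dy)m(dx) on X × X is symmetric under (x,y) ↦ (y,x). Fix x₀ ∈ X, R > 2 and c₁ > 2, and define the cut-off function θ_R(x) = max( min( (R − d(x,x₀))/(R − 1), 1 ), 0 ). Then ∬ (θ_R(x) − θ_R(y))² j(x,dy) m(dx) ≤ (33 c₁² / R²) · ∫_{ closedBall(x₀,R) } ∫ ( min(d(x,y), R) )² j(x,dy) m(dx). -/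
open MeasureTheory ProbabilityTheory Metric
open scoped ENNReal

/-!
Since `θ_R` takes values in `[0, 1]` and is `1/(R-1)`-Lipschitz, for `R ≥ 2` one has
`(θ_R x - θ_R y)² ≤ (4/R²) (d(x,y) ∧ R)²`. The integrand vanishes unless `x` or `y` lies in
`closedBall x₀ R`, and the symmetry of `J` turns the contribution of `{y ∈ closedBall x₀ R}`
into that of `{x ∈ closedBall x₀ R}`, which costs a factor `2`; finally `8 ≤ 33 c₁²`.
-/

section SymmetricJumpMeasure

variable {X : Type*} [MeasurableSpace X] {m : Measure X} [SFinite m] {j : Kernel X X}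
  [IsSFiniteKernel j]

theorem lintegral_lintegral_le_two_mul_setLIntegral_of_symm
    (hsymm : (m ⊗ₘ j).map Prod.swap = m ⊗ₘ j) {f : X × X → ℝ≥0∞} (hf : Measurable f)
    (hf_symm : ∀ p, f p.swap = f p) {s : Set X} (hs : MeasurableSet s)
    (hf_zero : ∀ x ∉ s, ∀ y ∉ s, f (x, y) = 0) :
    ∫⁻ x, ∫⁻ y, f (x, y) ∂(j x) ∂m ≤ 2 * ∫⁻ x in s, ∫⁻ y, f (x, y) ∂(j x) ∂m := by
  have hs_univ : MeasurableSet (s ×ˢ (Set.univ : Set X)) := hs.prod MeasurableSet.univ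
  have h_support : Function.support f ⊆ s ×ˢ Set.univ ∪ Set.univ ×ˢ s := by
    rintro ⟨x, y⟩ hxy
    by_contra h
    simp only [Set.mem_union, Set.mem_prod, Set.mem_univ, and_true, true_and, not_or] at h
    exact hxy (hf_zero x h.1 y h.2)
  have h_swap : ∫⁻ p in Set.univ ×ˢ s, f p ∂(m ⊗ₘ j) = ∫⁻ p in s ×ˢ Set.univ, f p ∂(m ⊗ₘ j) := by
    conv_rhs => rw [← hsymm]
    rw [setLIntegral_map hs_univ hf measurable_swap, Set.preimage_swap_prod]
    simp only [hf_symm]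
  calc ∫⁻ x, ∫⁻ y, f (x, y) ∂(j x) ∂m
      = ∫⁻ p in s ×ˢ Set.univ ∪ Set.univ ×ˢ s, f p ∂(m ⊗ₘ j) := by
        rw [setLIntegral_eq_of_support_subset h_support, Measure.lintegral_compProd hf]
    _ ≤ 2 * ∫⁻ p in s ×ˢ Set.univ, f p ∂(m ⊗ₘ j) := by
        rw [two_mul]
        nth_rewrite 2 [← h_swap]
        exact lintegral_union_le _ _ _
    _ = 2 * ∫⁻ x in s, ∫⁻ y, f (x, y) ∂(j x) ∂m := by
        rw [Measure.setLIntegral_compProd hf hs MeasurableSet.univ]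
        simp only [Measure.restrict_univ]

end SymmetricJumpMeasure

section RadialCutoff

variable {X : Type*} [MetricSpace X]

noncomputable def radialCutoff (x₀ : X) (R : ℝ) (x : X) : ℝ :=
  max (min ((R - dist x x₀) / (R - 1)) 1) 0

variable (x₀ : X) {R : ℝ}

theorem radialCutoff_mem_Icc (x : X) : radialCutoff x₀ R x ∈ Set.Icc 0 1 :=
  ⟨le_max_right _ _, max_le (min_le_right _ _) zero_le_one⟩

theorem continuous_radialCutoff : Continuous (radialCutoff x₀ R) := by
  unfold radialCutoff; fun_prop

theorem radialCutoff_eq_zero_of_notMem_closedBall (hR : 1 < R) {x : X}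
    (hx : x ∉ closedBall x₀ R) : radialCutoff x₀ R x = 0 := by
  have hdist : R < dist x x₀ := by simpa only [mem_closedBall, not_le] using hx
  have hneg : (R - dist x x₀) / (R - 1) < 0 := div_neg_of_neg_of_pos (by linarith) (by linarith)
  exact max_eq_right ((min_le_left _ _).trans hneg.le)

theorem abs_radialCutoff_sub_le (hR : 1 < R) (x y : X) :
    |radialCutoff x₀ R x - radialCutoff x₀ R y| ≤ dist x y / (R - 1) := by
  refine (abs_max_sub_max_le_abs _ _ _).trans <| (abs_min_sub_min_le_max _ _ _ _).trans ?_
  rw [sub_self, abs_zero, max_eq_left (abs_nonneg _), div_sub_div_same, abs_div,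
    abs_of_pos (sub_pos.2 hR), sub_sub_sub_cancel_left]
  gcongr
  rw [dist_comm x y]
  exact abs_dist_sub_le y x x₀

theorem sq_radialCutoff_sub_le (hR : 2 ≤ R) (x y : X) :
    (radialCutoff x₀ R x - radialCutoff x₀ R y) ^ 2 ≤ 4 / R ^ 2 * min (dist x y) R ^ 2 := by
  have hR1 : 0 < R - 1 := by linarith
  have h_abs : |radialCutoff x₀ R x - radialCutoff x₀ R y| ≤ min (dist x y) R / (R - 1) := by
    rcases le_total (dist x y) R with h | h
    · rw [min_eq_left h]
      exact abs_radialCutoff_sub_le x₀ (by linarith) x y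
    · rw [min_eq_right h, le_div_iff₀ hR1]
      have hx := radialCutoff_mem_Icc x₀ (R := R) x
      have hy := radialCutoff_mem_Icc x₀ (R := R) y
      have : |radialCutoff x₀ R x - radialCutoff x₀ R y| ≤ 1 :=
        abs_sub_le_iff.2 ⟨by linarith [hx.2, hy.1], by linarith [hy.2, hx.1]⟩
      nlinarith
  -- `R ≥ 2` is exactly what makes `1 / (R - 1) ≤ 2 / R`
  have h_div : min (dist x y) R / (R - 1) ≤ 2 / R * min (dist x y) R := by
    have h_inv : 1 / (R - 1) ≤ 2 / R := by
      rw [div_le_div_iff₀ hR1 (by linarith)]; linarith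
    rw [div_eq_inv_mul, ← one_div]
    gcongr
  calc (radialCutoff x₀ R x - radialCutoff x₀ R y) ^ 2
      = |radialCutoff x₀ R x - radialCutoff x₀ R y| ^ 2 := (sq_abs _).symm
    _ ≤ (2 / R * min (dist x y) R) ^ 2 := by gcongr; exact h_abs.trans h_div
    _ = 4 / R ^ 2 * min (dist x y) R ^ 2 := by ring

end RadialCutoff

/-- Jump-energy estimate for the cut-off `θ_R` in the recurrence test:
`∬ (θ_R(x) − θ_R(y))² j(x,dy) m(dx)
   ≤ (33 c₁²/R²) ∫_{closedBall(x₀,R)} ∫ (d(x,y) ∧ R)² j(x,dy) m(dx)`. -/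
theorem stmt_2 {X : Type*} [MetricSpace X] [MeasurableSpace X] [BorelSpace X]
    (m : Measure X) [SFinite m] (j : Kernel X X) [IsSFiniteKernel j]
    (hsymm : (m ⊗ₘ j).map Prod.swap = m ⊗ₘ j)
    (x₀ : X) (R c₁ : ℝ) (hR : 2 < R) (hc₁ : 2 < c₁)
    (θ : X → ℝ) (hθ : ∀ x, θ x = max (min ((R - dist x x₀) / (R - 1)) 1) 0) :
    ∫⁻ x, ∫⁻ y, ENNReal.ofReal ((θ x - θ y) ^ 2) ∂(j x) ∂m
      ≤ ENNReal.ofReal (33 * c₁ ^ 2 / R ^ 2) *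
        ∫⁻ x in closedBall x₀ R, ∫⁻ y, ENNReal.ofReal ((min (dist x y) R) ^ 2) ∂(j x) ∂m := by
  obtain rfl : θ = radialCutoff x₀ R := funext hθ
  have h_meas : Measurable fun p : X × X =>
      ENNReal.ofReal ((radialCutoff x₀ R p.1 - radialCutoff x₀ R p.2) ^ 2) := by
    have := (continuous_radialCutoff x₀ (R := R)).measurable
    fun_prop
  have h_zero : ∀ x ∉ closedBall x₀ R, ∀ y ∉ closedBall x₀ R,
      ENNReal.ofReal ((radialCutoff x₀ R x - radialCutoff x₀ R y) ^ 2) = 0 := fun x hx y hy => by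
    rw [radialCutoff_eq_zero_of_notMem_closedBall x₀ (by linarith) hx,
      radialCutoff_eq_zero_of_notMem_closedBall x₀ (by linarith) hy, sub_zero, zero_pow two_ne_zero,
      ENNReal.ofReal_zero]
  calc ∫⁻ x, ∫⁻ y, ENNReal.ofReal ((radialCutoff x₀ R x - radialCutoff x₀ R y) ^ 2) ∂(j x) ∂m
      ≤ 2 * ∫⁻ x in closedBall x₀ R, ∫⁻ y,
          ENNReal.ofReal ((radialCutoff x₀ R x - radialCutoff x₀ R y) ^ 2) ∂(j x) ∂m :=
        lintegral_lintegral_le_two_mul_setLIntegral_of_symm hsymm h_meas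
          (fun p => by rw [Prod.fst_swap, Prod.snd_swap, ← neg_sub, neg_sq])
          measurableSet_closedBall h_zero
    _ ≤ 2 * ∫⁻ x in closedBall x₀ R, ∫⁻ y,
          ENNReal.ofReal (4 / R ^ 2) * ENNReal.ofReal (min (dist x y) R ^ 2) ∂(j x) ∂m := by
        gcongr with x y
        rw [← ENNReal.ofReal_mul (by positivity)]
        exact ENNReal.ofReal_le_ofReal (sq_radialCutoff_sub_le x₀ hR.le x y)
    _ = ENNReal.ofReal (8 / R ^ 2) *
          ∫⁻ x in closedBall x₀ R, ∫⁻ y, ENNReal.ofReal (min (dist x y) R ^ 2) ∂(j x) ∂m := by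
        simp_rw [lintegral_const_mul' _ _ ENNReal.ofReal_ne_top]
        rw [← mul_assoc, ← ENNReal.ofReal_ofNat 2, ← ENNReal.ofReal_mul zero_le_two]
        ring_nf
    _ ≤ ENNReal.ofReal (33 * c₁ ^ 2 / R ^ 2) *
          ∫⁻ x in closedBall x₀ R, ∫⁻ y, ENNReal.ofReal (min (dist x y) R ^ 2) ∂(j x) ∂m := by
        gcongr
        nlinarith
end

section
/- Let n ≥ 1, x₀ ∈ ℝⁿ and R > 2, and define θ_R : ℝⁿ → ℝ by θ_R(x) = max( min( (R − ‖x − x₀‖)/(R − 1), 1 ), 0 ). Then ∫_{ℝⁿ} ‖fderiv ℝ θ_R x‖² dx ≤ (4 / R²) · volume( closedBall(x₀, R) ), where fderiv ℝ θ_R x denotes the Fréchet derivative of θ_R at x (taken to be 0 at points where θ_R is not differentiable) and volume is Lebesgue measure. -/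
open MeasureTheory Metric

theorem lipschitzWith_cutoff {E : Type*} [SeminormedAddCommGroup E] (x₀ : E) (R : ℝ) {c : ℝ}
    (hc : 0 < c) :
    LipschitzWith (Real.toNNReal c⁻¹) fun x => max (min ((R - ‖x - x₀‖) / c) 1) 0 := by
  refine (LipschitzWith.of_dist_le_mul fun x y => ?_).min_const 1 |>.max_const 0
  rw [Real.coe_toNNReal _ (inv_nonneg.2 hc.le), Real.dist_eq, ← sub_div, abs_div, abs_of_pos hc,
    div_eq_inv_mul, sub_sub_sub_cancel_left, abs_sub_comm]
  gcongr
  simpa [dist_eq_norm] using abs_norm_sub_norm_le (x - x₀) (y - x₀)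

theorem tsupport_cutoff_subset_closedBall {E : Type*} [SeminormedAddCommGroup E] (x₀ : E) (R : ℝ)
    {c : ℝ} (hc : 0 < c) :
    tsupport (fun x => max (min ((R - ‖x - x₀‖) / c) 1) 0) ⊆ closedBall x₀ R := by
  refine closure_minimal (fun x hx => ?_) isClosed_closedBall
  by_contra hxR
  rw [mem_closedBall, dist_eq_norm, not_le] at hxR
  have : (R - ‖x - x₀‖) / c ≤ 0 := div_nonpos_of_nonpos_of_nonneg (by linarith) hc.le
  exact hx (max_eq_right ((min_le_left _ _).trans this))

theorem lintegral_norm_fderiv_sq_le {E F : Type*} [NormedAddCommGroup E] [NormedSpace ℝ E]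
    [NormedAddCommGroup F] [NormedSpace ℝ F] [MeasurableSpace E] (μ : Measure E) {f : E → F}
    {K : NNReal} (hf : LipschitzWith K f) {s : Set E} (hs : MeasurableSet s)
    (hfs : tsupport f ⊆ s) :
    ∫⁻ x, ENNReal.ofReal (‖fderiv ℝ f x‖ ^ 2) ∂μ ≤ ENNReal.ofReal ((K : ℝ) ^ 2) * μ s := by
  calc ∫⁻ x, ENNReal.ofReal (‖fderiv ℝ f x‖ ^ 2) ∂μ
      ≤ ∫⁻ x, s.indicator (fun _ => ENNReal.ofReal ((K : ℝ) ^ 2)) x ∂μ := by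
        refine lintegral_mono fun x => ?_
        by_cases hx : x ∈ s
        · rw [Set.indicator_of_mem hx]
          gcongr
          exact norm_fderiv_le_of_lipschitz ℝ hf
        · have : fderiv ℝ f x = 0 :=
            Function.notMem_support.1 fun h => hx (hfs (support_fderiv_subset ℝ h))
          simp [this]
    _ = ENNReal.ofReal ((K : ℝ) ^ 2) * μ s := lintegral_indicator_const hs _

theorem stmt_3_general (n : ℕ) (x₀ : EuclideanSpace ℝ (Fin n)) (R : ℝ) (hR : 2 < R)
    (θ : EuclideanSpace ℝ (Fin n) → ℝ)
    (hθ : ∀ x, θ x = max (min ((R - ‖x - x₀‖) / (R - 1)) 1) 0) :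
    ∫⁻ x, ENNReal.ofReal (‖fderiv ℝ θ x‖ ^ 2)
      ≤ ENNReal.ofReal (4 / R ^ 2) * volume (closedBall x₀ R) := by
  have hR₁ : 0 < R - 1 := by linarith
  obtain rfl : θ = fun x => max (min ((R - ‖x - x₀‖) / (R - 1)) 1) 0 := funext hθ
  refine (lintegral_norm_fderiv_sq_le volume (lipschitzWith_cutoff x₀ R hR₁)
    measurableSet_closedBall (tsupport_cutoff_subset_closedBall x₀ R hR₁)).trans ?_
  gcongr
  have hinv : (R - 1)⁻¹ ≤ 2 / R := by
    rw [inv_eq_one_div, div_le_div_iff₀ hR₁ (by linarith)]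
    linarith
  calc ((R - 1)⁻¹).toNNReal ^ 2 = ((R - 1)⁻¹) ^ 2 := by
        rw [Real.coe_toNNReal _ (inv_nonneg.2 hR₁.le)]
    _ ≤ (2 / R) ^ 2 := by gcongr
    _ = 4 / R ^ 2 := by ring

/-- Dirichlet-energy estimate for the cut-off `θ_R` on `ℝⁿ`:
`∫ ‖∇θ_R‖² dx ≤ (4/R²) · volume(closedBall(x₀,R))`, where the gradient is the
Fréchet derivative (taken to be `0` at non-differentiability points). -/
theorem stmt_3 (n : ℕ) (hn : 1 ≤ n) (x₀ : EuclideanSpace ℝ (Fin n)) (R : ℝ) (hR : 2 < R)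
    (θ : EuclideanSpace ℝ (Fin n) → ℝ)
    (hθ : ∀ x, θ x = max (min ((R - ‖x - x₀‖) / (R - 1)) 1) 0) :
    ∫⁻ x, ENNReal.ofReal (‖fderiv ℝ θ x‖ ^ 2)
      ≤ ENNReal.ofReal (4 / R ^ 2) * volume (closedBall x₀ R) :=
  stmt_3_general n x₀ R hR θ hθ
end

section
/- Let (X,d) be a metric space with Borel σ-algebra, m a measure on X, 0 < a < 1, and j a measurable kernel on X such that j(x, X \ closedBall(x,a)) = 0 for every x and ∫ ( min(d(x,y),a) )² j(x,dy) ≤ M for every x, where M > 0. Let K ⊆ X be a nonempty bounded set, x₀ ∈ X, and D = sup_{y ∈ K} d(x₀,y). Let α > 0 and φ(x) = exp( α · dist(x,K) ), where dist(x,K) = inf_{y∈K} d(x,y). Let n ∈ ℕ with n ≥ a⁻¹ (4a + 2D), let g_n(x) = max( min( n − a⁻¹ d(x,x₀), 1 ), 0 ), and let A_n = closedBall(x₀,(n+1)a) \ ball(x₀,(n−2)a). Then ∫_X φ(x)⁻¹ ( ∫ (g_n(x) − g_n(y))² j(x,dy) ) m(dx) ≤ a⁻² M e^{−aαn/2} m(A_n).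 -/
/-!
The cut-off `g_n` is `a⁻¹`-Lipschitz with values in `[0, 1]`, so `(g_n(x) − g_n(y))²` is at most
`a⁻² min(d(x,y), a)²` and the moment bound on `j` gives `Γ[g_n] ≤ a⁻² M`. Since `j(x, ·)` only
charges `closedBall x a` and `g_n` is constant (`0` or `1`) on `a`-balls around points outside
`A_n`, the integrand vanishes off `A_n`. On `A_n` the point is at distance at least
`(n − 2)a − D ≥ an/2` from `K`, which bounds the weight `φ⁻¹`.
-/

open MeasureTheory ProbabilityTheory Metric

lemma abs_clamp_sub_clamp_le (u v : ℝ) :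
    |max (min u 1) 0 - max (min v 1) 0| ≤ min |u - v| 1 := by
  refine le_min ((abs_max_sub_max_le_abs _ _ _).trans ?_) ?_
  · simpa using abs_min_sub_min_le_max u 1 v 1
  · exact abs_sub_le_of_nonneg_of_le (le_max_right _ _) (max_le (min_le_right _ _) zero_le_one)
      (le_max_right _ _) (max_le (min_le_right _ _) zero_le_one)

lemma lintegral_ofReal_sq_sub_eq_zero {X : Type*} [MeasurableSpace X] {μ : Measure X}
    {s : Set X} (hs : μ sᶜ = 0) {g : X → ℝ} {x : X} (hg : ∀ y ∈ s, g y = g x) :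
    ∫⁻ y, ENNReal.ofReal ((g x - g y) ^ 2) ∂μ = 0 := by
  have hzero : ∀ᵐ y ∂μ, ENNReal.ofReal ((g x - g y) ^ 2) = 0 := by
    filter_upwards [measure_eq_zero_iff_ae_notMem.mp hs] with y hy
    simp [hg y (by simpa using hy)]
  exact (lintegral_congr_ae hzero).trans lintegral_zero

section PseudoMetric

variable {X : Type*} [PseudoMetricSpace X]

noncomputable def cutoff (a t : ℝ) (x₀ x : X) : ℝ :=
  max (min (t - a⁻¹ * dist x x₀) 1) 0

variable {a t : ℝ} {x₀ x y : X}

lemma abs_cutoff_sub_le (ha : 0 < a) :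
    |cutoff a t x₀ x - cutoff a t x₀ y| ≤ a⁻¹ * min (dist x y) a := by
  have hlip : |(t - a⁻¹ * dist x x₀) - (t - a⁻¹ * dist y x₀)| ≤ a⁻¹ * dist x y := by
    rw [sub_sub_sub_cancel_left, ← mul_sub, abs_mul, abs_of_pos (inv_pos.mpr ha)]
    exact mul_le_mul_of_nonneg_left (dist_comm x y ▸ abs_dist_sub_le y x x₀) (by positivity)
  rw [mul_min_of_nonneg _ _ (inv_pos.mpr ha).le, inv_mul_cancel₀ ha.ne']
  exact (abs_clamp_sub_clamp_le _ _).trans (min_le_min_right 1 hlip)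

lemma sq_cutoff_sub_le (ha : 0 < a) :
    (cutoff a t x₀ x - cutoff a t x₀ y) ^ 2 ≤ a⁻¹ ^ 2 * min (dist x y) a ^ 2 := by
  rw [← mul_pow, ← sq_abs]
  exact pow_le_pow_left₀ (abs_nonneg _) (abs_cutoff_sub_le ha) 2

lemma cutoff_eq_zero (ha : 0 < a) (hx : t * a ≤ dist x x₀) : cutoff a t x₀ x = 0 := by
  have : t ≤ a⁻¹ * dist x x₀ := by rwa [← le_div_iff₀ ha, div_eq_inv_mul] at hx
  simp only [cutoff]
  rw [min_eq_left (by linarith), max_eq_right (by linarith)]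

lemma cutoff_eq_one (ha : 0 < a) (hx : dist x x₀ ≤ (t - 1) * a) : cutoff a t x₀ x = 1 := by
  have : a⁻¹ * dist x x₀ ≤ t - 1 := by rwa [← div_le_iff₀ ha, div_eq_inv_mul] at hx
  simp only [cutoff]
  rw [min_eq_right (by linarith), max_eq_left zero_le_one]

lemma cutoff_eq_of_notMem_annulus (ha : 0 < a)
    (hx : x ∉ closedBall x₀ ((t + 1) * a) \ ball x₀ ((t - 2) * a)) (hy : y ∈ closedBall x a) :
    cutoff a t x₀ y = cutoff a t x₀ x := by
  have h₁ := dist_triangle y x x₀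
  have h₂ := dist_triangle x y x₀
  have hyx := mem_closedBall.mp hy
  have hxy := mem_closedBall'.mp hy
  rw [Set.mem_sdiff, not_and_not_right, mem_closedBall, mem_ball] at hx
  by_cases hout : (t + 1) * a < dist x x₀
  · rw [cutoff_eq_zero ha (by linarith), cutoff_eq_zero ha (by linarith)]
  · have hin := hx (not_lt.mp hout)
    rw [cutoff_eq_one ha (by linarith), cutoff_eq_one ha (by linarith)]

lemma dist_le_sSup_image_dist {K : Set X} (hK : Bornology.IsBounded K) (hy : y ∈ K) :
    dist x₀ y ≤ sSup ((dist x₀) '' K) := by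
  refine le_csSup ?_ ⟨y, hy, rfl⟩
  obtain ⟨r, hr⟩ := hK.subset_closedBall x₀
  exact ⟨r, by rintro _ ⟨z, hz, rfl⟩; simpa [dist_comm] using hr hz⟩

lemma half_mul_le_infDist {K : Set X} (hK : K.Nonempty) {D : ℝ}
    (hD : ∀ y ∈ K, dist x₀ y ≤ D) (ht : 4 * a + 2 * D ≤ a * t) (hx : (t - 2) * a ≤ dist x x₀) :
    a * t / 2 ≤ infDist x K := by
  refine (le_infDist hK).mpr fun y hy => ?_
  have := dist_triangle x y x₀
  linarith [hD y hy, dist_comm x₀ y]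

end PseudoMetric

lemma lintegral_ofReal_sq_sub_le {X : Type*} [PseudoMetricSpace X] [MeasurableSpace X]
    {μ : Measure X} {a M : ℝ} {g : X → ℝ} {x : X}
    (hμ : ∫⁻ y, ENNReal.ofReal (min (dist x y) a ^ 2) ∂μ ≤ ENNReal.ofReal M)
    (hg : ∀ y, (g x - g y) ^ 2 ≤ a⁻¹ ^ 2 * min (dist x y) a ^ 2) :
    ∫⁻ y, ENNReal.ofReal ((g x - g y) ^ 2) ∂μ ≤ ENNReal.ofReal (a⁻¹ ^ 2 * M) := by
  calc ∫⁻ y, ENNReal.ofReal ((g x - g y) ^ 2) ∂μ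
      ≤ ∫⁻ y, ENNReal.ofReal (a⁻¹ ^ 2) * ENNReal.ofReal (min (dist x y) a ^ 2) ∂μ :=
        lintegral_mono fun y => by
          rw [← ENNReal.ofReal_mul (by positivity)]
          exact ENNReal.ofReal_le_ofReal (hg y)
    _ = ENNReal.ofReal (a⁻¹ ^ 2) * ∫⁻ y, ENNReal.ofReal (min (dist x y) a ^ 2) ∂μ :=
        lintegral_const_mul' _ _ ENNReal.ofReal_ne_top
    _ ≤ ENNReal.ofReal (a⁻¹ ^ 2) * ENNReal.ofReal M := by gcongr
    _ = ENNReal.ofReal (a⁻¹ ^ 2 * M) := (ENNReal.ofReal_mul (by positivity)).symm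

lemma lintegral_le_mul_measure_of_eq_zero_of_le {X : Type*} [MeasurableSpace X] {μ : Measure X}
    {A : Set X} (hA : MeasurableSet A) {F : X → ENNReal} {c : ENNReal}
    (h_out : ∀ x ∉ A, F x = 0) (h_in : ∀ x ∈ A, F x ≤ c) :
    ∫⁻ x, F x ∂μ ≤ c * μ A := by
  rw [← lintegral_indicator_const hA]
  refine lintegral_mono fun x => ?_
  by_cases hx : x ∈ A
  · simpa [Set.indicator_of_mem hx] using h_in x hx
  · simp [Set.indicator_of_notMem hx, h_out x hx]

theorem stmt_6_general {X : Type*} [MetricSpace X] [MeasurableSpace X] [BorelSpace X]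
    (m : Measure X) (j : Kernel X X)
    (a M : ℝ) (ha0 : 0 < a)
    (hjsupp : ∀ x, j x (closedBall x a)ᶜ = 0)
    (hjM : ∀ x, ∫⁻ y, ENNReal.ofReal ((min (dist x y) a) ^ 2) ∂(j x) ≤ ENNReal.ofReal M)
    (K : Set X) (hK : K.Nonempty) (hKb : Bornology.IsBounded K)
    (x₀ : X) (D : ℝ) (hD : D = sSup ((fun y => dist x₀ y) '' K))
    (α : ℝ) (hα : 0 < α)
    (φ : X → ℝ) (hφ : ∀ x, φ x = Real.exp (α * infDist x K))
    (n : ℕ) (hn : a⁻¹ * (4 * a + 2 * D) ≤ (n : ℝ))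
    (g : X → ℝ) (hg : ∀ x, g x = max (min ((n : ℝ) - a⁻¹ * dist x x₀) 1) 0)
    (A : Set X) (hA : A = closedBall x₀ (((n : ℝ) + 1) * a) \ ball x₀ (((n : ℝ) - 2) * a)) :
    ∫⁻ x, ENNReal.ofReal ((φ x)⁻¹) * ∫⁻ y, ENNReal.ofReal ((g x - g y) ^ 2) ∂(j x) ∂m
      ≤ ENNReal.ofReal (a⁻¹ ^ 2 * M * Real.exp (-(a * α * (n : ℝ)) / 2)) * m A := by
  obtain rfl : g = cutoff a n x₀ := funext hg
  have hDK : ∀ y ∈ K, dist x₀ y ≤ D := fun y hy => hD ▸ dist_le_sSup_image_dist hKb hy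
  have hna : 4 * a + 2 * D ≤ a * n := by rwa [← inv_mul_le_iff₀ ha0]
  have hφA : ∀ x ∈ A, (φ x)⁻¹ ≤ Real.exp (-(a * α * n) / 2) := fun x hx => by
    rw [hA, Set.mem_sdiff, mem_ball, not_lt] at hx
    have := mul_le_mul_of_nonneg_left (half_mul_le_infDist hK hDK hna hx.2) hα.le
    rw [hφ, ← Real.exp_neg, Real.exp_le_exp]
    linarith
  refine lintegral_le_mul_measure_of_eq_zero_of_le
    (hA ▸ measurableSet_closedBall.diff measurableSet_ball) (fun x hx => ?_) (fun x hx => ?_)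
  · rw [lintegral_ofReal_sq_sub_eq_zero (hjsupp x)
      fun y hy => cutoff_eq_of_notMem_annulus ha0 (hA ▸ hx) hy, mul_zero]
  · rw [mul_comm _ (Real.exp _), ENNReal.ofReal_mul (by positivity)]
    exact mul_le_mul' (ENNReal.ofReal_le_ofReal (hφA x hx))
      (lintegral_ofReal_sq_sub_le (hjM x) fun y => sq_cutoff_sub_le ha0)

/-- Key estimate for Davies' method: the `φ⁻¹`-weighted jump energy of the
cut-off `g_n` is at most `a⁻² M e^{−aαn/2} m(A_n)`, where
`A_n = closedBall(x₀,(n+1)a) \ ball(x₀,(n−2)a)`, `φ = exp(α·dist(·,K))`,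
`D = sup_{y∈K} d(x₀,y)` and `n ≥ a⁻¹(4a+2D)`. -/
theorem stmt_6 {X : Type*} [MetricSpace X] [MeasurableSpace X] [BorelSpace X]
    (m : Measure X) (j : Kernel X X)
    (a M : ℝ) (ha0 : 0 < a) (ha1 : a < 1) (hM : 0 < M)
    (hjsupp : ∀ x, j x (closedBall x a)ᶜ = 0)
    (hjM : ∀ x, ∫⁻ y, ENNReal.ofReal ((min (dist x y) a) ^ 2) ∂(j x) ≤ ENNReal.ofReal M)
    (K : Set X) (hK : K.Nonempty) (hKb : Bornology.IsBounded K)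
    (x₀ : X) (D : ℝ) (hD : D = sSup ((fun y => dist x₀ y) '' K))
    (α : ℝ) (hα : 0 < α)
    (φ : X → ℝ) (hφ : ∀ x, φ x = Real.exp (α * infDist x K))
    (n : ℕ) (hn : a⁻¹ * (4 * a + 2 * D) ≤ (n : ℝ))
    (g : X → ℝ) (hg : ∀ x, g x = max (min ((n : ℝ) - a⁻¹ * dist x x₀) 1) 0)
    (A : Set X) (hA : A = closedBall x₀ (((n : ℝ) + 1) * a) \ ball x₀ (((n : ℝ) - 2) * a)) :
    ∫⁻ x, ENNReal.ofReal ((φ x)⁻¹) * ∫⁻ y, ENNReal.ofReal ((g x - g y) ^ 2) ∂(j x) ∂m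
      ≤ ENNReal.ofReal (a⁻¹ ^ 2 * M * Real.exp (-(a * α * (n : ℝ)) / 2)) * m A :=
  stmt_6_general m j a M ha0 hjsupp hjM K hK hKb x₀ D hD α hα φ hφ n hn g hg A hA
end

section
/- Let (X,d) be a metric space with Borel σ-algebra, 0 < a ≤ 1, and j a measurable kernel on X such that j(x, X \ closedBall(x,a)) = 0 for every x and ∫ ( min(d(x,y),a) )² j(x,dy) ≤ M for every x, where M > 0. Let ψ : X → [0,∞) be 1-Lipschitz, let α > 0 and n > 0, and set φ(x) = exp( α · min(ψ(x), n) ). Then for every x ∈ X, ∫ (φ(x) − φ(y))² j(x,dy) ≤ M α² e^{2αa} φ(x)². -/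
/-!
On the support of `j(x, ·)` we have `d(x, y) ≤ a`, and `α (ψ ∧ n)` is `α`-Lipschitz, so the
exponential's mean value bound `|eˢ - eᵗ| ≤ e^{max s t} |s - t|` gives
`(φ x - φ y)² ≤ α² e^{2αa} φ(x)² d(x, y)²`; integrating against `j(x, ·)` and using the
truncated second-moment bound yields the estimate.
-/

open MeasureTheory ProbabilityTheory Metric

namespace Real

theorem exp_sub_exp_le_exp_mul_sub (s t : ℝ) : exp s - exp t ≤ exp s * (s - t) := by
  have h := mul_le_mul_of_nonneg_left (add_one_le_exp (t - s)) (exp_pos s).le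
  rw [← exp_add, add_sub_cancel] at h
  linarith

theorem abs_exp_sub_exp_le_exp_max_mul (s t : ℝ) :
    |exp s - exp t| ≤ exp (max s t) * |s - t| := by
  have key : ∀ s t : ℝ, exp s * (s - t) ≤ exp (max s t) * |s - t| := by
    intro s t
    rcases le_total t s with h | h
    · rw [abs_of_nonneg (sub_nonneg.2 h)]
      gcongr
      exact le_max_left s t
    · nlinarith [exp_pos s, exp_pos (max s t), abs_nonneg (s - t)]
  refine abs_sub_le_iff.2 ⟨(exp_sub_exp_le_exp_mul_sub s t).trans (key s t), ?_⟩
  rw [max_comm, abs_sub_comm]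
  exact (exp_sub_exp_le_exp_mul_sub t s).trans (key t s)

end Real

theorem sq_exp_mul_sub_exp_mul_le {X : Type*} [PseudoMetricSpace X] {g : X → ℝ}
    (hg : LipschitzWith 1 g) {α a : ℝ} (hα : 0 ≤ α) {x y : X} (hxy : dist x y ≤ a) :
    (Real.exp (α * g x) - Real.exp (α * g y)) ^ 2
      ≤ α ^ 2 * Real.exp (2 * α * a) * Real.exp (α * g x) ^ 2 * dist x y ^ 2 := by
  set u := α * g x
  set v := α * g y
  have hgxy : |g x - g y| ≤ dist x y := by
    simpa [Real.dist_eq] using hg.dist_le_mul x y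
  have huv : |u - v| ≤ α * dist x y := by
    rw [← mul_sub, abs_mul, abs_of_nonneg hα]
    gcongr
  have hmax : max u v ≤ u + α * a := by
    have hvu : v - u ≤ α * dist x y := (le_abs_self _).trans ((abs_sub_comm v u).le.trans huv)
    have hd0 : 0 ≤ α * dist x y := mul_nonneg hα dist_nonneg
    have hda : α * dist x y ≤ α * a := by gcongr
    exact max_le (by linarith) (by linarith)
  have habs : |Real.exp u - Real.exp v| ≤ Real.exp (α * a) * Real.exp u * (α * dist x y) :=
    calc |Real.exp u - Real.exp v|
        ≤ Real.exp (max u v) * |u - v| := Real.abs_exp_sub_exp_le_exp_max_mul u v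
      _ ≤ Real.exp (u + α * a) * (α * dist x y) := by gcongr
      _ = Real.exp (α * a) * Real.exp u * (α * dist x y) := by rw [Real.exp_add]; ring
  calc (Real.exp u - Real.exp v) ^ 2 = |Real.exp u - Real.exp v| ^ 2 := (sq_abs _).symm
    _ ≤ (Real.exp (α * a) * Real.exp u * (α * dist x y)) ^ 2 := by gcongr
    _ = α ^ 2 * Real.exp (2 * α * a) * Real.exp u ^ 2 * dist x y ^ 2 := by
      rw [show 2 * α * a = α * a + α * a by ring, Real.exp_add]
      ring

theorem lintegral_ofReal_le_mul_lintegral_min_dist_sq {X : Type*} [PseudoMetricSpace X]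
    [MeasurableSpace X] {μ : Measure X} {x : X} {a C : ℝ} (hC : 0 ≤ C)
    (hμ : μ (closedBall x a)ᶜ = 0) {f : X → ℝ}
    (hf : ∀ y ∈ closedBall x a, f y ≤ C * dist x y ^ 2) :
    ∫⁻ y, ENNReal.ofReal (f y) ∂μ
      ≤ ENNReal.ofReal C * ∫⁻ y, ENNReal.ofReal (min (dist x y) a ^ 2) ∂μ := by
  have hae : ∀ᵐ y ∂μ,
      ENNReal.ofReal (f y) ≤ ENNReal.ofReal C * ENNReal.ofReal (min (dist x y) a ^ 2) := by
    filter_upwards [measure_eq_zero_iff_ae_notMem.1 hμ] with y hy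
    rw [Set.notMem_compl_iff] at hy
    rw [← ENNReal.ofReal_mul hC, min_eq_left (mem_closedBall'.1 hy)]
    exact ENNReal.ofReal_le_ofReal (hf y hy)
  calc ∫⁻ y, ENNReal.ofReal (f y) ∂μ
      ≤ ∫⁻ y, ENNReal.ofReal C * ENNReal.ofReal (min (dist x y) a ^ 2) ∂μ :=
        lintegral_mono_ae hae
    _ = _ := lintegral_const_mul' _ _ ENNReal.ofReal_ne_top

theorem stmt_7_general {X : Type*} [MetricSpace X] [MeasurableSpace X] [BorelSpace X]
    (j : Kernel X X) (a M : ℝ)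
    (hjsupp : ∀ x, j x (closedBall x a)ᶜ = 0)
    (hjM : ∀ x, ∫⁻ y, ENNReal.ofReal ((min (dist x y) a) ^ 2) ∂(j x) ≤ ENNReal.ofReal M)
    (ψ : X → ℝ) (hψ : LipschitzWith 1 ψ)
    (α n : ℝ) (hα : 0 < α)
    (φ : X → ℝ) (hφ : ∀ x, φ x = Real.exp (α * min (ψ x) n)) :
    ∀ x, ∫⁻ y, ENNReal.ofReal ((φ x - φ y) ^ 2) ∂(j x)
      ≤ ENNReal.ofReal (M * α ^ 2 * Real.exp (2 * α * a) * φ x ^ 2) := by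
  intro x
  simp only [hφ]
  calc ∫⁻ y, ENNReal.ofReal ((Real.exp (α * min (ψ x) n) - Real.exp (α * min (ψ y) n)) ^ 2)
        ∂(j x)
      ≤ ENNReal.ofReal (α ^ 2 * Real.exp (2 * α * a) * Real.exp (α * min (ψ x) n) ^ 2)
          * ∫⁻ y, ENNReal.ofReal (min (dist x y) a ^ 2) ∂(j x) :=
        lintegral_ofReal_le_mul_lintegral_min_dist_sq (by positivity) (hjsupp x) fun _ hy =>
          sq_exp_mul_sub_exp_mul_le (hψ.min_const n) hα.le (mem_closedBall'.1 hy)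
    _ ≤ ENNReal.ofReal (α ^ 2 * Real.exp (2 * α * a) * Real.exp (α * min (ψ x) n) ^ 2)
          * ENNReal.ofReal M := by gcongr; exact hjM x
    _ = _ := by rw [← ENNReal.ofReal_mul (by positivity), mul_comm, ← mul_assoc, ← mul_assoc]

/-- Pointwise bound on the jump carré du champ of the truncated exponential
weight `φ = exp(α(ψ ∧ n))` for a `1`-Lipschitz nonnegative `ψ`, when the kernel
`j` has jump range bounded by `a` and truncated second moments bounded by `M`:
`∫ (φ(x) − φ(y))² j(x,dy) ≤ M α² e^{2αa} φ(x)²`. -/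
theorem stmt_7 {X : Type*} [MetricSpace X] [MeasurableSpace X] [BorelSpace X]
    (j : Kernel X X) (a M : ℝ) (ha0 : 0 < a) (ha1 : a ≤ 1) (hM : 0 < M)
    (hjsupp : ∀ x, j x (closedBall x a)ᶜ = 0)
    (hjM : ∀ x, ∫⁻ y, ENNReal.ofReal ((min (dist x y) a) ^ 2) ∂(j x) ≤ ENNReal.ofReal M)
    (ψ : X → ℝ) (hψ : LipschitzWith 1 ψ) (hψ0 : ∀ x, 0 ≤ ψ x)
    (α n : ℝ) (hα : 0 < α) (hn : 0 < n)
    (φ : X → ℝ) (hφ : ∀ x, φ x = Real.exp (α * min (ψ x) n)) :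
    ∀ x, ∫⁻ y, ENNReal.ofReal ((φ x - φ y) ^ 2) ∂(j x)
      ≤ ENNReal.ofReal (M * α ^ 2 * Real.exp (2 * α * a) * φ x ^ 2) :=
  stmt_7_general j a M hjsupp hjM ψ hψ α n hα φ hφ
end

section
/- Let X be a measurable space, m a measure on X, and j a measurable kernel on X. Let u, φ : X → ℝ be measurable with φ(x) > 0 for all x. Then ∫_X |u(x)| ( ∫ |u(x) − u(y)| · |φ(x) − φ(y)| j(x,dy) ) m(dx) ≤ ( ∫_X φ(x) ∫ (u(x) − u(y))² j(x,dy) m(dx) )^{1/2} · ( ∫_X φ(x)⁻¹ u(x)² ∫ (φ(x) − φ(y))² j(x,dy) m(dx) )^{1/2}. -/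
open MeasureTheory ProbabilityTheory Set

/-!
Write `A x = ∫ (u x - u y)² j(x,dy)` and `B x = ∫ (φ x - φ y)² j(x,dy)`. Cauchy–Schwarz in `y`
bounds the inner integral by `√(A x B x)`; splitting `|u x| = √(φ x · φ(x)⁻¹ u(x)²)` and applying
Cauchy–Schwarz in `x` gives the claim. The only delicate point is that `A` and `B` are measurable
although `j` is not assumed s-finite: by the layer-cake formula, `A x` is an integral over `t > 0`
of `j x {y | u y < u x - √t} + j x {y | u x + √t < u y}`, and `(x, s) ↦ j x {y | u y < s}` is a
countable supremum over rationals `q < s` of measurable functions.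
-/

section

variable {X Y : Type*} [MeasurableSpace X] [MeasurableSpace Y]

theorem measurable_kernel_preimage_Iio (κ : Kernel X Y) {v : Y → ℝ} (hv : Measurable v) :
    Measurable fun p : X × ℝ => κ p.1 (v ⁻¹' Iio p.2) := by
  have hsup : ∀ x s, κ x (v ⁻¹' Iio s) = ⨆ q : ℚ, ⨆ _ : (q : ℝ) < s, κ x (v ⁻¹' Iic (q : ℝ)) := by
    intro x s
    have hunion : v ⁻¹' Iio s = ⋃ q ∈ {q : ℚ | (q : ℝ) < s}, v ⁻¹' Iic (q : ℝ) := by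
      ext y
      simp only [mem_preimage, mem_Iio, mem_iUnion, mem_Iic, mem_ofPred_eq, exists_prop]
      refine ⟨fun h => ?_, fun ⟨q, hqs, hyq⟩ => hyq.trans_lt hqs⟩
      obtain ⟨q, hyq, hqs⟩ := exists_rat_btwn h
      exact ⟨q, hqs, hyq.le⟩
    rw [hunion]
    refine measure_biUnion_eq_iSup (to_countable _) ?_
    exact (DirectedOn.of_linearOrder _).mono fun q r (hqr : q ≤ r) =>
      preimage_mono (Iic_subset_Iic.2 (Rat.cast_le (K := ℝ) |>.2 hqr))
  simp_rw [hsup, iSup_eq_if]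
  exact Measurable.iSup fun q => Measurable.ite (measurableSet_lt measurable_const measurable_snd)
    ((κ.measurable_coe (hv measurableSet_Iic)).comp measurable_fst) measurable_const

theorem measurable_kernel_preimage_Ioi (κ : Kernel X Y) {v : Y → ℝ} (hv : Measurable v) :
    Measurable fun p : X × ℝ => κ p.1 (v ⁻¹' Ioi p.2) := by
  have hneg : ∀ s, v ⁻¹' Ioi s = (-v) ⁻¹' Iio (-s) := fun s => by ext; simp
  simp_rw [hneg]
  exact (measurable_kernel_preimage_Iio κ hv.neg).comp (measurable_fst.prodMk measurable_snd.neg)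

theorem lt_sub_sq_iff {t a b : ℝ} (ht : 0 ≤ t) : t < (a - b) ^ 2 ↔ b < a - √t ∨ a + √t < b := by
  rw [← Real.sqrt_lt_sqrt_iff ht, Real.sqrt_sq_eq_abs, lt_abs]
  constructor <;> rintro (h | h) <;> [left; right; left; right] <;> linarith

theorem measurable_lintegral_kernel_sub_sq (κ : Kernel X Y) {w : X → ℝ} {v : Y → ℝ}
    (hw : Measurable w) (hv : Measurable v) :
    Measurable fun x => ∫⁻ y, ENNReal.ofReal ((w x - v y) ^ 2) ∂κ x := by
  have hlayer : ∀ x, ∫⁻ y, ENNReal.ofReal ((w x - v y) ^ 2) ∂κ x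
      = ∫⁻ t in Ioi 0, κ x (v ⁻¹' Iio (w x - √t)) + κ x (v ⁻¹' Ioi (w x + √t)) := by
    intro x
    rw [lintegral_eq_lintegral_meas_lt _ (f := fun y => (w x - v y) ^ 2)
      (.of_forall fun y => sq_nonneg _) ((measurable_const.sub hv).pow_const 2).aemeasurable]
    refine setLIntegral_congr_fun measurableSet_Ioi fun t ht => ?_
    have hset : {y | t < (w x - v y) ^ 2} = v ⁻¹' Iio (w x - √t) ∪ v ⁻¹' Ioi (w x + √t) := by
      ext y; exact lt_sub_sq_iff (le_of_lt ht)
    have hdisj : Disjoint (v ⁻¹' Iio (w x - √t)) (v ⁻¹' Ioi (w x + √t)) :=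
      disjoint_left.2 fun y (h₁ : v y < _) (h₂ : _ < v y) => by linarith [Real.sqrt_nonneg t]
    rw [hset, measure_union hdisj (hv measurableSet_Ioi)]
  simp_rw [hlayer]
  have hsqrt : Measurable fun p : X × ℝ => √p.2 :=
    Real.continuous_sqrt.measurable.comp measurable_snd
  refine Measurable.lintegral_prod_right' (ν := volume.restrict (Ioi 0))
    (f := fun p : X × ℝ => κ p.1 (v ⁻¹' Iio (w p.1 - √p.2)) + κ p.1 (v ⁻¹' Ioi (w p.1 + √p.2)))
    (Measurable.add ?_ ?_)
  · exact (measurable_kernel_preimage_Iio κ hv).comp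
      (measurable_fst.prodMk ((hw.comp measurable_fst).sub hsqrt))
  · exact (measurable_kernel_preimage_Ioi κ hv).comp
      (measurable_fst.prodMk ((hw.comp measurable_fst).add hsqrt))

end

theorem ENNReal.ofReal_sq_rpow_half (c : ℝ) :
    ENNReal.ofReal (c ^ 2) ^ (1 / 2 : ℝ) = ENNReal.ofReal |c| := by
  rw [← sq_abs, ENNReal.ofReal_pow (abs_nonneg c), one_div, ← ENNReal.rpow_natCast,
    ← ENNReal.rpow_mul]
  norm_num

/-- Weighted double Cauchy–Schwarz inequality of Davies' method for the jump part:
`∫ |u| ∫ |u(x)−u(y)||φ(x)−φ(y)| j(x,dy) dm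
  ≤ (∫ φ ∫ (u(x)−u(y))² j(x,dy) dm)^{1/2} (∫ φ⁻¹ u² ∫ (φ(x)−φ(y))² j(x,dy) dm)^{1/2}`. -/
theorem stmt_8 {X : Type*} [MeasurableSpace X] (m : Measure X) (j : Kernel X X)
    (u φ : X → ℝ) (hu : Measurable u) (hφm : Measurable φ) (hφ : ∀ x, 0 < φ x) :
    ∫⁻ x, ENNReal.ofReal |u x| * ∫⁻ y, ENNReal.ofReal (|u x - u y| * |φ x - φ y|) ∂(j x) ∂m
      ≤ (∫⁻ x, ENNReal.ofReal (φ x) * ∫⁻ y, ENNReal.ofReal ((u x - u y) ^ 2) ∂(j x) ∂m) ^ (1/2 : ℝ)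
        * (∫⁻ x, ENNReal.ofReal ((φ x)⁻¹ * u x ^ 2) *
            ∫⁻ y, ENNReal.ofReal ((φ x - φ y) ^ 2) ∂(j x) ∂m) ^ (1/2 : ℝ) := by
  set A := fun x => ∫⁻ y, ENNReal.ofReal ((u x - u y) ^ 2) ∂(j x)
  set B := fun x => ∫⁻ y, ENNReal.ofReal ((φ x - φ y) ^ 2) ∂(j x)
  have inner (x : X) : ∫⁻ y, ENNReal.ofReal (|u x - u y| * |φ x - φ y|) ∂(j x)
      ≤ A x ^ (1 / 2 : ℝ) * B x ^ (1 / 2 : ℝ) := by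
    simpa only [ENNReal.ofReal_sq_rpow_half, ENNReal.ofReal_mul (abs_nonneg _)] using
      ENNReal.lintegral_mul_norm_pow_le (μ := j x)
        (by fun_prop : Measurable fun y => ENNReal.ofReal ((u x - u y) ^ 2)).aemeasurable
        (by fun_prop : Measurable fun y => ENNReal.ofReal ((φ x - φ y) ^ 2)).aemeasurable
        one_half_pos.le one_half_pos.le (add_halves 1)
  have weight (x : X) : ENNReal.ofReal |u x| * (A x ^ (1 / 2 : ℝ) * B x ^ (1 / 2 : ℝ))
      = (ENNReal.ofReal (φ x) * A x) ^ (1 / 2 : ℝ)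
        * (ENNReal.ofReal ((φ x)⁻¹ * u x ^ 2) * B x) ^ (1 / 2 : ℝ) := by
    have hsplit : ENNReal.ofReal (φ x) * ENNReal.ofReal ((φ x)⁻¹ * u x ^ 2)
        = ENNReal.ofReal (u x ^ 2) := by
      rw [← ENNReal.ofReal_mul (hφ x).le, mul_inv_cancel_left₀ (hφ x).ne']
    rw [← ENNReal.ofReal_sq_rpow_half, ← hsplit]
    simp only [ENNReal.mul_rpow_of_nonneg _ _ one_half_pos.le]
    ring
  have hA : Measurable A := measurable_lintegral_kernel_sub_sq j hu hu
  have hB : Measurable B := measurable_lintegral_kernel_sub_sq j hφm hφm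
  calc _ ≤ ∫⁻ x, ENNReal.ofReal |u x| * (A x ^ (1 / 2 : ℝ) * B x ^ (1 / 2 : ℝ)) ∂m :=
        lintegral_mono fun x => by gcongr; exact inner x
    _ = ∫⁻ x, (ENNReal.ofReal (φ x) * A x) ^ (1 / 2 : ℝ)
          * (ENNReal.ofReal ((φ x)⁻¹ * u x ^ 2) * B x) ^ (1 / 2 : ℝ) ∂m :=
        lintegral_congr weight
    _ ≤ _ := ENNReal.lintegral_mul_norm_pow_le
        ((ENNReal.measurable_ofReal.comp hφm).mul hA).aemeasurable
        ((ENNReal.measurable_ofReal.comp (hφm.inv.mul (hu.pow_const 2))).mul hB).aemeasurable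
        one_half_pos.le one_half_pos.le (add_halves 1)
end
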